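/- In the graph B (complete bipartite core with perturbed unit capacities), for every arc e = {x_i, y_j}, the vitality of e satisfies 0 < flowVit(e) < 1. In particular all k² bipartite arcs have nontrivial vitality: 0 < flowVit(e) < c(e). -/

import Mathlib

open Finset

/-- Capacity of the s-t cut determined by `S` (arcs from `S` to its complement). -/
def cutCap {V : Type*} [Fintype V] [DecidableEq V] (c : V → V → ℝ) (S : Finset V) : ℝ :=
  ∑ x ∈ S, ∑ y ∈ Sᶜ, c x y

/-- Minimum capacity of an s-t cut. -/
noncomputable def minCut {V : Type*} [Fintype V] [DecidableEq V] (c : V → V → ℝ)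
    (s t : V) : ℝ :=
  sInf {r | ∃ S : Finset V, s ∈ S ∧ t ∉ S ∧ r = cutCap c S}

/-- Nodes of the graph `B`: source `s`, sink `t`, and the bipartite core `x₁,…,x_k`,
`y₁,…,y_k`. -/
inductive BNode (k : ℕ) : Type
  | s : BNode k
  | t : BNode k
  | x : Fin k → BNode k
  | y : Fin k → BNode k
  deriving DecidableEq, Fintype

/-- The (symmetric) capacity function of the graph `B`: edges `{s, xᵢ}` and `{yⱼ, t}`
of capacity `k`, and edges `{xᵢ, yⱼ}` of capacity `1 + ε i j`. -/
def Bcap (k : ℕ) (ε : Fin k → Fin k → ℝ) : BNode k → BNode k → ℝ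
  | .s, .x _ => k
  | .x _, .s => k
  | .t, .y _ => k
  | .y _, .t => k
  | .x i, .y j => 1 + ε i j
  | .y j, .x i => 1 + ε i j
  | _, _ => 0

/-- The graph with arc `e` deleted (its capacity set to `0`). -/
def delArc {V : Type*} [DecidableEq V] (c : V → V → ℝ) (e : V × V) : V → V → ℝ :=
  fun x y => if (x, y) = e then 0 else c x y

/-!
Lower bounds on minimum cuts come from flows by weak duality. In `B`, one unit along every path
`s → xₐ → y_b → t` is a flow of value `k²`, matched by the cut `{s}`. After deleting `xᵢyⱼ`, drop
the path through it and send `δ = min (ε i j₀) (ε i₀ j) > 0` units along the detour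
`s → xᵢ → y_{j₀} → x_{i₀} → yⱼ → t`: this uses only the unit freed on `sxᵢ` and `yⱼt`, the slack
`ε` of `xᵢy_{j₀}` and `x_{i₀}yⱼ`, and the idle reverse arc `y_{j₀}x_{i₀}`, so the minimum cut is
at least `k² - 1 + δ`. Conversely the cut `{s, xᵢ}` has capacity `k² - 1 + ∑_{b ≠ j} ε i b < k²`
since every `ε < 1/k`.
-/

section WeakDuality

variable {V : Type*} [Fintype V] [DecidableEq V]

def netOutflow (f : V → V → ℝ) (v : V) : ℝ :=
  ∑ u, f v u - ∑ u, f u v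

lemma sum_netOutflow (f : V → V → ℝ) (S : Finset V) :
    ∑ v ∈ S, netOutflow f v = ∑ u ∈ S, ∑ v ∈ Sᶜ, (f u v - f v u) := by
  simp only [netOutflow, ← sum_add_sum_compl S, sum_sub_distrib, sum_add_distrib]
  rw [sum_comm (s := S) (t := S) (f := fun v u => f u v),
    sum_comm (s := S) (t := Sᶜ) (f := fun v u => f u v)]
  ring

lemma netOutflow_le_cutCap {c f : V → V → ℝ} {s t : V} {S : Finset V}
    (hf : ∀ u v, 0 ≤ f u v) (hfc : ∀ u v, f u v ≤ c u v)
    (hcons : ∀ v, v ≠ s → v ≠ t → netOutflow f v = 0) (hs : s ∈ S) (ht : t ∉ S) :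
    netOutflow f s ≤ cutCap c S := by
  have hsum : netOutflow f s = ∑ v ∈ S, netOutflow f v := by
    rw [← add_sum_erase S _ hs, sum_eq_zero, add_zero]
    intro v hv
    exact hcons v (ne_of_mem_erase hv) (ne_of_mem_of_not_mem (mem_of_mem_erase hv) ht)
  rw [hsum, sum_netOutflow, cutCap]
  gcongr with u _ v _
  linarith [hf v u, hfc u v]

lemma netOutflow_le_minCut {c f : V → V → ℝ} {s t : V} (hst : s ≠ t)
    (hf : ∀ u v, 0 ≤ f u v) (hfc : ∀ u v, f u v ≤ c u v)
    (hcons : ∀ v, v ≠ s → v ≠ t → netOutflow f v = 0) :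
    netOutflow f s ≤ minCut c s t := by
  refine le_csInf ⟨_, {s}, mem_singleton_self s, by simpa using hst.symm, rfl⟩ ?_
  rintro _ ⟨S, hs, ht, rfl⟩
  exact netOutflow_le_cutCap hf hfc hcons hs ht

lemma minCut_le_cutCap {c : V → V → ℝ} {s t : V} {S : Finset V} (hs : s ∈ S) (ht : t ∉ S) :
    minCut c s t ≤ cutCap c S :=
  csInf_le
    ((Set.finite_range (cutCap c)).subset (by rintro _ ⟨S, -, -, rfl⟩; exact ⟨S, rfl⟩)).bddBelow
    ⟨S, hs, ht, rfl⟩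

lemma cutCap_eq_sum_sub (c : V → V → ℝ) (S : Finset V) :
    cutCap c S = ∑ u ∈ S, (∑ v, c u v - ∑ v ∈ S, c u v) := by
  simp only [cutCap, ← sum_add_sum_compl S, add_sub_cancel_left]

end WeakDuality

namespace BNode

def equivSum (k : ℕ) : (Unit ⊕ Unit) ⊕ (Fin k ⊕ Fin k) ≃ BNode k where
  toFun
    | .inl (.inl _) => .s
    | .inl (.inr _) => .t
    | .inr (.inl a) => .x a
    | .inr (.inr b) => .y b
  invFun
    | .s => .inl (.inl ())
    | .t => .inl (.inr ())
    | .x a => .inr (.inl a)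
    | .y b => .inr (.inr b)
  left_inv := by rintro ((_ | _) | (_ | _)) <;> rfl
  right_inv := by rintro (_ | _ | _ | _) <;> rfl

lemma sum_univ {k : ℕ} (g : BNode k → ℝ) :
    ∑ v, g v = g .s + g .t + ∑ a, g (.x a) + ∑ b, g (.y b) := by
  rw [← (equivSum k).sum_comp]
  simp [equivSum, Fintype.sum_sum_type, add_assoc]

end BNode

/-- One unit along every path `s → xₐ → y_b → t`, minus `μ` units along `s → xᵢ → yⱼ → t`,
plus `δ` units along `s → xᵢ → y_{j₀} → x_{i₀} → yⱼ → t`. -/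
def detourFlow (k : ℕ) (i j i₀ j₀ : Fin k) (μ δ : ℝ) : BNode k → BNode k → ℝ
  | .s, .x a => k + if a = i then δ - μ else 0
  | .y b, .t => k + if b = j then δ - μ else 0
  | .x a, .y b => 1 + (if a = i ∧ b = j then -μ else 0) + (if a = i ∧ b = j₀ then δ else 0)
      + (if a = i₀ ∧ b = j then δ else 0)
  | .y b, .x a => if a = i₀ ∧ b = j₀ then δ else 0
  | _, _ => 0

section DetourFlow

variable {k : ℕ} {i j i₀ j₀ : Fin k} {μ δ : ℝ} {ε : Fin k → Fin k → ℝ}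

lemma netOutflow_detourFlow_s :
    netOutflow (detourFlow k i j i₀ j₀ μ δ) .s = k * k + δ - μ := by
  simp only [netOutflow, detourFlow, BNode.sum_univ, sum_add_distrib, sum_const, card_univ,
    Fintype.card_fin, nsmul_eq_mul, sum_ite_eq', mem_univ, ↓reduceIte, add_zero, zero_add]
  ring

lemma netOutflow_detourFlow_eq_zero (v : BNode k) (hs : v ≠ .s) (ht : v ≠ .t) :
    netOutflow (detourFlow k i j i₀ j₀ μ δ) v = 0 := by
  cases v with
  | s => exact absurd rfl hs
  | t => exact absurd rfl ht
  | x a | y a =>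
    simp only [netOutflow, detourFlow, ite_and, BNode.sum_univ, sum_const_zero, sum_add_distrib,
      sum_const, card_univ, Fintype.card_fin, nsmul_eq_mul, mul_one, sum_ite_irrel, sum_ite_eq',
      mem_univ, ↓reduceIte, add_zero, zero_add]
    split_ifs <;> ring

lemma detourFlow_nonneg (hμ : μ ≤ 1) (hδ : 0 ≤ δ) (u v : BNode k) :
    0 ≤ detourFlow k i j i₀ j₀ μ δ u v := by
  have hk : (1 : ℝ) ≤ k := by exact_mod_cast i.pos
  cases u <;> cases v <;> simp only [detourFlow, le_refl] <;> split_ifs <;> linarith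

lemma detourFlow_zero_le_Bcap (hε : ∀ a b, 0 ≤ ε a b) (u v : BNode k) :
    detourFlow k i j i₀ j₀ 0 0 u v ≤ Bcap k ε u v := by
  cases u <;> cases v <;> simp only [detourFlow, Bcap] <;> grind

lemma detourFlow_one_le_delArc (hi₀ : i₀ ≠ i) (hj₀ : j₀ ≠ j) (hε : ∀ a b, 0 ≤ ε a b)
    (hδ : δ ≤ 1) (hδi : δ ≤ ε i j₀) (hδj : δ ≤ ε i₀ j) (u v : BNode k) :
    detourFlow k i j i₀ j₀ 1 δ u v ≤
      delArc (delArc (Bcap k ε) (.x i, .y j)) (.y j, .x i) u v := by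
  cases u <;> cases v <;> simp only [detourFlow, Bcap, delArc] <;> grind

end DetourFlow

section MinCutsOfB

variable {k : ℕ} {ε : Fin k → Fin k → ℝ}

lemma cutCap_Bcap_source : cutCap (Bcap k ε) {.s} = k * k := by
  simp [cutCap_eq_sum_sub, BNode.sum_univ, Bcap]

lemma cutCap_delArc_Bcap_source_x (i j : Fin k) :
    cutCap (delArc (delArc (Bcap k ε) (.x i, .y j)) (.y j, .x i)) {.s, .x i} =
      k * k - k + ∑ b, (1 + ε i b) - (1 + ε i j) := by
  simp only [cutCap_eq_sum_sub, delArc, Prod.mk.injEq, Bcap, BNode.sum_univ, reduceCtorEq,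
    and_false, false_and, and_true, true_and, ↓reduceIte, BNode.x.injEq, BNode.y.injEq,
    mem_singleton, not_false_eq_true, sum_insert, sum_singleton, sum_sub_distrib, sum_const,
    card_univ, Fintype.card_fin, nsmul_eq_mul, add_zero, zero_add]
  rw [sum_ite, sum_const_zero, zero_add, filter_ne', sum_erase_eq_sub (mem_univ j)]
  ring

lemma minCut_Bcap [NeZero k] (hε : ∀ a b, 0 ≤ ε a b) : minCut (Bcap k ε) .s .t = k * k := by
  refine le_antisymm ?_ ?_
  · rw [← cutCap_Bcap_source]
    exact minCut_le_cutCap (mem_singleton_self _) (by simp)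
  · have := netOutflow_le_minCut (by simp) (detourFlow_nonneg zero_le_one le_rfl)
      (detourFlow_zero_le_Bcap (i := 0) (j := 0) (i₀ := 0) (j₀ := 0) hε)
      netOutflow_detourFlow_eq_zero
    simpa [netOutflow_detourFlow_s] using this

lemma minCut_delArc_Bcap_lt (hε : ∀ a b, 0 < ε a b ∧ ε a b < 1 / k) (i j : Fin k) :
    minCut (delArc (delArc (Bcap k ε) (.x i, .y j)) (.y j, .x i)) .s .t < k * k := by
  have hk : (0 : ℝ) < k := by exact_mod_cast i.pos
  have hrow : ∑ b, (1 + ε i b) < k + 1 := by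
    calc ∑ b, (1 + ε i b) < ∑ _b : Fin k, (1 + 1 / (k : ℝ)) :=
          sum_lt_sum_of_nonempty ⟨i, mem_univ i⟩ fun b _ => by linarith [(hε i b).2]
      _ = k + 1 := by simp [hk.ne']
  calc _ ≤ cutCap (delArc (delArc (Bcap k ε) (.x i, .y j)) (.y j, .x i)) {.s, .x i} :=
        minCut_le_cutCap (by simp) (by simp)
    _ < k * k := by
        rw [cutCap_delArc_Bcap_source_x]
        linarith [(hε i j).1]

lemma sub_one_lt_minCut_delArc_Bcap (hk : 2 ≤ k) (hε : ∀ a b, 0 < ε a b ∧ ε a b < 1)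
    (i j : Fin k) :
    k * k - 1 < minCut (delArc (delArc (Bcap k ε) (.x i, .y j)) (.y j, .x i)) .s .t := by
  obtain ⟨i₀, hi₀⟩ := Fintype.exists_ne_of_one_lt_card (by simp; omega) i
  obtain ⟨j₀, hj₀⟩ := Fintype.exists_ne_of_one_lt_card (by simp; omega) j
  have hδ : 0 < min (ε i j₀) (ε i₀ j) := lt_min (hε i j₀).1 (hε i₀ j).1
  have := netOutflow_le_minCut (by simp) (detourFlow_nonneg le_rfl hδ.le)
    (detourFlow_one_le_delArc hi₀ hj₀ (fun a b => (hε a b).1.le)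
      ((min_le_left _ _).trans (hε i j₀).2.le) (min_le_left _ _) (min_le_right _ _))
    netOutflow_detourFlow_eq_zero
  rw [netOutflow_detourFlow_s] at this
  linarith

end MinCutsOfB

theorem bipartite_arcs_nontrivial_vitality (k : ℕ) (hk : 2 ≤ k)
    (ε : Fin k → Fin k → ℝ) (hε : ∀ i j, 0 < ε i j ∧ ε i j < 1 / k) (i j : Fin k) :
    -- `B - e` where `e = {xᵢ, yⱼ}` : both orientations of the edge are removed
    0 < minCut (Bcap k ε) BNode.s BNode.t -
          minCut (delArc (delArc (Bcap k ε) (BNode.x i, BNode.y j))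
            (BNode.y j, BNode.x i)) BNode.s BNode.t ∧
      minCut (Bcap k ε) BNode.s BNode.t -
          minCut (delArc (delArc (Bcap k ε) (BNode.x i, BNode.y j))
            (BNode.y j, BNode.x i)) BNode.s BNode.t < 1 ∧
      minCut (Bcap k ε) BNode.s BNode.t -
          minCut (delArc (delArc (Bcap k ε) (BNode.x i, BNode.y j))
            (BNode.y j, BNode.x i)) BNode.s BNode.t <
        Bcap k ε (BNode.x i) (BNode.y j) := by
  have : NeZero k := ⟨by omega⟩
  have hε₀ : ∀ a b, 0 ≤ ε a b := fun a b => (hε a b).1.le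
  have hε₁ : ∀ a b, 0 < ε a b ∧ ε a b < 1 := fun a b =>
    ⟨(hε a b).1, (hε a b).2.trans_le (div_le_one_of_le₀ (by exact_mod_cast i.pos) (by positivity))⟩
  have hB := minCut_Bcap hε₀
  have hlower := sub_one_lt_minCut_delArc_Bcap hk hε₁ i j
  have hupper := minCut_delArc_Bcap_lt hε i j
  refine ⟨by linarith, by linarith, ?_⟩
  change _ < 1 + ε i j
  linarith [(hε i j).1]
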